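/- Let 0 < α < 1, ρ > 0, 0 < β < 1, set λ₀ = ρ/√(1−α), θ₀ = θ(λ₀), let 0 < R < θ₀, and let λ₂ ∈ (λ₀, ∞) be the larger of the two solutions of θ(λ) = R. Then there exist constants c, C > 0, depending only on α, ρ and β, such that for every λ ∈ [λ₀, ∞) with λ ∉ (β·λ₂, β^{−1}·λ₂) one has c·(min{λ, λ₂})^{−(1−α)} ≤ |ψ_R′(λ)| ≤ C·(min{λ, λ₂})^{−(1−α)}. -/

import Mathlib

/-- `θ(λ) = α·λ·(λ² + ρ²)^{−(1−α/2)}`. -/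
noncomputable def theta (α ρ lam : ℝ) : ℝ :=
  α * lam * (lam ^ 2 + ρ ^ 2) ^ (-(1 - α / 2))

/-- The phase `ψ_R(λ) = (λ² + ρ²)^{α/2} − R·λ`, so that `ψ_R′(λ) = θ(λ) − R`. -/
noncomputable def psi (α ρ R lam : ℝ) : ℝ :=
  (lam ^ 2 + ρ ^ 2) ^ (α / 2) - R * lam

/-! On `[λ₀, ∞)` the function `θ` is decreasing, since `θ′(t)` has the sign of
`ρ² − (1 − α)t²`. For `μ ≥ λ₀` one even has `ρ² ≤ β(1 − α)t²` on `[μ/√β, μ/β]`, so that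
`−θ′(t) ≳ t^{α−2}` there, and the mean value theorem gives
`θ(μ) − θ(M) ≥ θ(μ/√β) − θ(μ/β) ≳ μ^{α−1}` whenever `M ≥ μ/β`; on the other side
`θ(μ) − θ(M) ≤ θ(μ) ≤ αμ^{α−1}`. Since `ψ_R′ = θ − θ(λ₂)`, this is applied to
`{μ, M} = {λ, λ₂}`. -/

open Real Set

noncomputable def thetaDeriv (α ρ t : ℝ) : ℝ :=
  α * (t ^ 2 + ρ ^ 2) ^ (α / 2 - 2) * (ρ ^ 2 - (1 - α) * t ^ 2)

section

variable {α ρ β : ℝ}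

lemma hasDerivAt_theta (hρ : ρ ≠ 0) (t : ℝ) :
    HasDerivAt (theta α ρ) (thetaDeriv α ρ t) t := by
  have hpos : 0 < t ^ 2 + ρ ^ 2 := by positivity
  have hbase : HasDerivAt (fun x : ℝ => x ^ 2 + ρ ^ 2) (2 * t) t := by
    simpa using (hasDerivAt_pow 2 t).add_const (ρ ^ 2)
  have h := ((hasDerivAt_id t).const_mul α).mul
    (hbase.rpow_const (p := -(1 - α / 2)) (Or.inl hpos.ne'))
  refine h.congr_deriv ?_
  rw [thetaDeriv, show -(1 - α / 2) = (α / 2 - 2) + 1 by ring,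
    show α / 2 - 2 + 1 - 1 = α / 2 - 2 by ring, rpow_add_one hpos.ne', id]
  ring

lemma hasDerivAt_psi (hρ : ρ ≠ 0) (R t : ℝ) :
    HasDerivAt (psi α ρ R) (theta α ρ t - R) t := by
  have hpos : 0 < t ^ 2 + ρ ^ 2 := by positivity
  have hbase : HasDerivAt (fun x : ℝ => x ^ 2 + ρ ^ 2) (2 * t) t := by
    simpa using (hasDerivAt_pow 2 t).add_const (ρ ^ 2)
  have h :=
    (hbase.rpow_const (p := α / 2) (Or.inl hpos.ne')).sub ((hasDerivAt_id t).const_mul R)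
  refine h.congr_deriv ?_
  rw [theta, show -(1 - α / 2) = α / 2 - 1 by ring]
  ring

lemma theta_pos (hα : 0 < α) {t : ℝ} (ht : 0 < t) : 0 < theta α ρ t := by
  unfold theta
  positivity

lemma theta_le_rpow (hα0 : 0 ≤ α) (hα2 : α ≤ 2) {t : ℝ} (ht : 0 < t) :
    theta α ρ t ≤ α * t ^ (α - 1) := by
  have hmono : (t ^ 2 + ρ ^ 2) ^ (-(1 - α / 2)) ≤ (t ^ 2) ^ (-(1 - α / 2)) :=
    rpow_le_rpow_of_nonpos (by positivity) (by nlinarith) (by linarith)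
  calc theta α ρ t ≤ α * t * (t ^ 2) ^ (-(1 - α / 2)) := by
        unfold theta; gcongr
    _ = α * t ^ (α - 1) := by
        rw [← rpow_natCast_mul ht.le,
          show α - 1 = ((2 : ℕ) : ℝ) * -(1 - α / 2) + 1 by push_cast; ring, rpow_add_one ht.ne']
        ring

lemma thetaDeriv_le {γ ξ : ℝ} (hα0 : 0 ≤ α) (hα1 : α ≤ 1) (hγ : γ ≤ 1) (hξ : 0 < ξ)
    (hρξ : ρ ^ 2 ≤ γ * (1 - α) * ξ ^ 2) :
    thetaDeriv α ρ ξ ≤ -(α * 2 ^ (α / 2 - 2) * (1 - α) * (1 - γ) * ξ ^ (α - 2)) := by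
  have hρ_le : ρ ^ 2 ≤ ξ ^ 2 := by
    nlinarith [sq_nonneg ξ, mul_nonneg (sub_nonneg.2 hα1) (sq_nonneg ξ)]
  have hpow : 2 ^ (α / 2 - 2) * ξ ^ (α - 4) ≤ (ξ ^ 2 + ρ ^ 2) ^ (α / 2 - 2) := by
    rw [show α - 4 = ((2 : ℕ) : ℝ) * (α / 2 - 2) by push_cast; ring, rpow_natCast_mul hξ.le,
      ← mul_rpow (by norm_num) (by positivity)]
    exact rpow_le_rpow_of_nonpos (by positivity) (by linarith) (by linarith)
  have hgap : (1 - α) * (1 - γ) * ξ ^ 2 ≤ (1 - α) * ξ ^ 2 - ρ ^ 2 := by linarith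
  have hξpow : ξ ^ (α - 2) = ξ ^ (α - 4) * ξ ^ 2 := by
    rw [show α - 2 = α - 4 + ((2 : ℕ) : ℝ) by push_cast; ring, rpow_add_natCast hξ.ne']
  calc thetaDeriv α ρ ξ
        = -(α * (ξ ^ 2 + ρ ^ 2) ^ (α / 2 - 2) * ((1 - α) * ξ ^ 2 - ρ ^ 2)) := by
        unfold thetaDeriv; ring
    _ ≤ -(α * (2 ^ (α / 2 - 2) * ξ ^ (α - 4)) * ((1 - α) * (1 - γ) * ξ ^ 2)) := by
        have : 0 ≤ (1 - α) * (1 - γ) := mul_nonneg (by linarith) (by linarith)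
        gcongr
    _ = -(α * 2 ^ (α / 2 - 2) * (1 - α) * (1 - γ) * ξ ^ (α - 2)) := by
        rw [hξpow]; ring

lemma sq_le_of_div_sqrt_le (hα1 : α < 1) (hρ : 0 ≤ ρ) {t : ℝ} (ht : ρ / √(1 - α) ≤ t) :
    ρ ^ 2 ≤ (1 - α) * t ^ 2 := by
  have hs : 0 < √(1 - α) := sqrt_pos.2 (by linarith)
  have h : ρ ≤ √(1 - α) * t := by rwa [div_le_iff₀' hs] at ht
  calc ρ ^ 2 ≤ (√(1 - α) * t) ^ 2 := pow_le_pow_left₀ hρ h 2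
    _ = (1 - α) * t ^ 2 := by rw [mul_pow, sq_sqrt (by linarith)]

lemma theta_antitoneOn (hα0 : 0 ≤ α) (hα1 : α < 1) (hρ : 0 < ρ) :
    AntitoneOn (theta α ρ) (Ici (ρ / √(1 - α))) := by
  have hderiv := hasDerivAt_theta (α := α) hρ.ne'
  refine antitoneOn_of_deriv_nonpos (convex_Ici _)
    (fun x _ => (hderiv x).continuousAt.continuousWithinAt)
    (fun x _ => (hderiv x).differentiableAt.differentiableWithinAt) fun x hx => ?_
  rw [interior_Ici] at hx
  have hx0 : 0 < x := (div_nonneg hρ.le (sqrt_nonneg _)).trans_lt hx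
  have h := thetaDeriv_le (γ := 1) hα0 hα1.le le_rfl hx0
    (by simpa using sq_le_of_div_sqrt_le hα1 hρ.le hx.le)
  rw [(hderiv x).deriv]
  simpa using h

lemma exists_mul_rpow_le_theta_sub (hα0 : 0 < α) (hα1 : α < 1) (hρ : 0 < ρ) (hβ0 : 0 < β)
    (hβ1 : β < 1) : ∃ c > 0, ∀ μ, ρ / √(1 - α) ≤ μ →
    c * μ ^ (α - 1) ≤ theta α ρ (μ / √β) - theta α ρ (μ / β) := by
  have hsβ : 0 < √β := sqrt_pos.2 hβ0
  have hβ_lt_sβ : β < √β := lt_sqrt_self_iff.2 ⟨hβ0.ne', hβ1⟩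
  set κ := α * 2 ^ (α / 2 - 2) * (1 - α) * (1 - β)
  have hκ : 0 < κ := by have := sub_pos.2 hα1; have := sub_pos.2 hβ1; positivity
  have hδ : 0 < β⁻¹ - (√β)⁻¹ := sub_pos.2 (inv_strictAnti₀ hβ0 hβ_lt_sβ)
  refine ⟨κ * (β⁻¹ - (√β)⁻¹) / β ^ (α - 2), by positivity, fun μ hμ => ?_⟩
  have hμ0 : 0 < μ := (div_pos hρ (sqrt_pos.2 (by linarith))).trans_le hμ
  set a := μ / √β
  set b := μ / β
  have hab : a ≤ b := div_le_div_of_nonneg_left hμ0.le hβ0 hβ_lt_sβ.le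
  have hderiv := hasDerivAt_theta (α := α) hρ.ne'
  have hslope : ∀ ξ ∈ interior (Icc a b), deriv (theta α ρ) ξ ≤ -(κ * b ^ (α - 2)) := by
    intro ξ hξ
    rw [interior_Icc] at hξ
    have hξ0 : 0 < ξ := (div_pos hμ0 hsβ).trans hξ.1
    have hμξ : μ ≤ √β * ξ := by have := hξ.1.le; rwa [div_le_iff₀' hsβ] at this
    have hρξ : ρ ^ 2 ≤ β * (1 - α) * ξ ^ 2 :=
      calc ρ ^ 2 ≤ (1 - α) * μ ^ 2 := sq_le_of_div_sqrt_le hα1 hρ.le hμ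
        _ ≤ (1 - α) * (√β * ξ) ^ 2 := by gcongr
        _ = β * (1 - α) * ξ ^ 2 := by rw [mul_pow, sq_sqrt hβ0.le]; ring
    have hpow : b ^ (α - 2) ≤ ξ ^ (α - 2) := rpow_le_rpow_of_nonpos hξ0 hξ.2.le (by linarith)
    rw [(hderiv ξ).deriv]
    calc thetaDeriv α ρ ξ ≤ -(κ * ξ ^ (α - 2)) := thetaDeriv_le hα0.le hα1.le hβ1.le hξ0 hρξ
      _ ≤ -(κ * b ^ (α - 2)) := by gcongr
  have hmvt := (convex_Icc a b).image_sub_le_mul_sub_of_deriv_le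
    (fun x _ => (hderiv x).continuousAt.continuousWithinAt)
    (fun x _ => (hderiv x).differentiableAt.differentiableWithinAt) hslope
    a (left_mem_Icc.2 hab) b (right_mem_Icc.2 hab) hab
  have hb_pow : b ^ (α - 2) = μ ^ (α - 2) / β ^ (α - 2) := div_rpow hμ0.le hβ0.le _
  have hμ_pow : μ ^ (α - 1) = μ ^ (α - 2) * μ := by
    rw [show α - 1 = α - 2 + 1 by ring, rpow_add_one hμ0.ne']
  calc κ * (β⁻¹ - (√β)⁻¹) / β ^ (α - 2) * μ ^ (α - 1)
        = κ * b ^ (α - 2) * (b - a) := by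
        rw [hb_pow, hμ_pow]; simp only [a, b, div_eq_mul_inv]; ring
    _ ≤ theta α ρ a - theta α ρ b := by linarith

lemma exists_abs_theta_sub_bounds_of_div_le (hα0 : 0 < α) (hα1 : α < 1) (hρ : 0 < ρ)
    (hβ0 : 0 < β) (hβ1 : β < 1) :
    ∃ c > 0, ∀ μ M, ρ / √(1 - α) ≤ μ → μ / β ≤ M →
      c * μ ^ (α - 1) ≤ |theta α ρ μ - theta α ρ M| ∧
      |theta α ρ μ - theta α ρ M| ≤ α * μ ^ (α - 1) := by
  obtain ⟨c, hc, hgap⟩ := exists_mul_rpow_le_theta_sub hα0 hα1 hρ hβ0 hβ1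
  refine ⟨c, hc, fun μ M hμ hM => ?_⟩
  have hμ0 : 0 < μ := (div_pos hρ (sqrt_pos.2 (by linarith))).trans_le hμ
  have hsβ : 0 < √β := sqrt_pos.2 hβ0
  have h1 : μ ≤ μ / √β := le_div_self hμ0.le hsβ (sqrt_le_one.2 hβ1.le)
  have h2 : μ / √β ≤ μ / β :=
    div_le_div_of_nonneg_left hμ0.le hβ0 (lt_sqrt_self_iff.2 ⟨hβ0.ne', hβ1⟩).le
  have hanti := theta_antitoneOn hα0.le hα1 hρ
  have hμ_left := hanti hμ (hμ.trans h1) h1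
  have hM_right := hanti (hμ.trans (h1.trans h2)) (hμ.trans (h1.trans (h2.trans hM))) hM
  have hlow : c * μ ^ (α - 1) ≤ theta α ρ μ - theta α ρ M := by linarith [hgap μ hμ]
  have hM0 : 0 < M := (div_pos hμ0 hβ0).trans_le hM
  rw [abs_of_nonneg ((mul_pos hc (rpow_pos_of_pos hμ0 _)).le.trans hlow)]
  exact ⟨hlow, by
    linarith [theta_pos (ρ := ρ) hα0 hM0, theta_le_rpow (ρ := ρ) hα0.le (by linarith) hμ0]⟩

lemma exists_abs_theta_sub_bounds (hα0 : 0 < α) (hα1 : α < 1) (hρ : 0 < ρ)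
    (hβ0 : 0 < β) (hβ1 : β < 1) :
    ∃ c > 0, ∀ x y, ρ / √(1 - α) ≤ x → ρ / √(1 - α) ≤ y → x ∉ Ioo (β * y) (β⁻¹ * y) →
      c * min x y ^ (α - 1) ≤ |theta α ρ x - theta α ρ y| ∧
      |theta α ρ x - theta α ρ y| ≤ α * min x y ^ (α - 1) := by
  obtain ⟨c, hc, hbounds⟩ := exists_abs_theta_sub_bounds_of_div_le hα0 hα1 hρ hβ0 hβ1
  refine ⟨c, hc, fun x y hx hy hxy => ?_⟩
  have hy0 : 0 < y := (div_pos hρ (sqrt_pos.2 (by linarith))).trans_le hy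
  rw [mem_Ioo, not_and_or, not_lt, not_lt] at hxy
  rcases hxy with hxy | hxy
  · rw [min_eq_left (hxy.trans (mul_le_of_le_one_left hy0.le hβ1.le))]
    exact hbounds x y hx (by rwa [div_le_iff₀' hβ0])
  · rw [min_eq_right ((le_mul_of_one_le_left hy0.le (one_le_inv₀ hβ0 |>.2 hβ1.le)).trans hxy),
      abs_sub_comm]
    exact hbounds y x hy (by rwa [div_eq_inv_mul])

end

theorem stmt5_general (α ρ β : ℝ) (hα0 : 0 < α) (hα1 : α < 1) (hρ : 0 < ρ)
    (hβ0 : 0 < β) (hβ1 : β < 1)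
    (lam0 θ0 : ℝ) (hlam0 : lam0 = ρ / Real.sqrt (1 - α)) :
    ∃ c C : ℝ, 0 < c ∧ 0 < C ∧
      ∀ R lam2 : ℝ, 0 < R → R < θ0 → lam2 ∈ Set.Ioi lam0 → theta α ρ lam2 = R →
        ∀ lam : ℝ, lam0 ≤ lam → lam ∉ Set.Ioo (β * lam2) (β⁻¹ * lam2) →
          c * (min lam lam2) ^ (-(1 - α)) ≤ |deriv (psi α ρ R) lam| ∧
          |deriv (psi α ρ R) lam| ≤ C * (min lam lam2) ^ (-(1 - α)) := by
  subst hlam0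
  obtain ⟨c, hc, hbounds⟩ := exists_abs_theta_sub_bounds hα0 hα1 hρ hβ0 hβ1
  refine ⟨c, α, hc, hα0, fun R lam2 _ _ hlam2 hR lam hlam hlam_nmem => ?_⟩
  rw [(hasDerivAt_psi hρ.ne' R lam).deriv, ← hR, neg_sub]
  exact hbounds lam lam2 hlam (le_of_lt hlam2) hlam_nmem

theorem stmt5 (α ρ β : ℝ) (hα0 : 0 < α) (hα1 : α < 1) (hρ : 0 < ρ)
    (hβ0 : 0 < β) (hβ1 : β < 1)
    (lam0 θ0 : ℝ) (hlam0 : lam0 = ρ / Real.sqrt (1 - α)) (hθ0 : θ0 = theta α ρ lam0) :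
    ∃ c C : ℝ, 0 < c ∧ 0 < C ∧
      ∀ R lam2 : ℝ, 0 < R → R < θ0 → lam2 ∈ Set.Ioi lam0 → theta α ρ lam2 = R →
        ∀ lam : ℝ, lam0 ≤ lam → lam ∉ Set.Ioo (β * lam2) (β⁻¹ * lam2) →
          c * (min lam lam2) ^ (-(1 - α)) ≤ |deriv (psi α ρ R) lam| ∧
          |deriv (psi α ρ R) lam| ≤ C * (min lam lam2) ^ (-(1 - α)) :=
  stmt5_general α ρ β hα0 hα1 hρ hβ0 hβ1 lam0 θ0 hlam0
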